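/- Let S be a left Ore domain with division ring of fractions Q, and let C ⊆ Q be a division subring such that Q is finite dimensional as a left C-vector space. Then every element of Q can be written as a left C-linear combination of elements of S. -/

import Mathlib

/-!
The left `C`-span `M` of `S` is stable under right multiplication by elements of `S`, and it is
finite dimensional over `C`. For `0 ≠ g ∈ S`, right multiplication by `g` is therefore an injective,
hence surjective, `C`-linear endomorphism of `M`; so `1 = m * g` for some `m ∈ M`, i.e. `g⁻¹ ∈ M`,
and then every fraction `g⁻¹ * f` lies in `M`.
-/

open Submodule

theorem Submodule.mul_mem_span_of_forall_mul_mem {R A : Type*} [Semiring R] [Semiring A]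
    [Module R A] [IsScalarTower R A A] {T : Set A} {s : A} (hT : ∀ y ∈ T, y * s ∈ T)
    {x : A} (hx : x ∈ span R T) : x * s ∈ span R T :=
  (span_le (p := (span R T).comap (LinearMap.mulRight R s))).2
    (fun y hy => subset_span (hT y hy)) hx

theorem Submodule.inv_mem_of_forall_mul_mem {K Q : Type*} [DivisionRing K] [DivisionRing Q]
    [Module K Q] [IsScalarTower K Q Q] {M : Submodule K Q} [FiniteDimensional K M]
    (one_mem : (1 : Q) ∈ M) {g : Q} (hg : g ≠ 0) (hM : ∀ x ∈ M, x * g ∈ M) : g⁻¹ ∈ M := by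
  have hinj : Set.InjOn (LinearMap.mulRight K g) M := fun x _ y _ h => mul_right_cancel₀ hg h
  obtain ⟨m, hm, hm1⟩ := (LinearMap.injOn_iff_surjOn hM).1 hinj one_mem
  rwa [← eq_inv_of_mul_eq_one_left hm1]

noncomputable abbrev Subring.divisionRingOfInvMem {Q : Type*} [DivisionRing Q] (C : Subring Q)
    (hC : ∀ c ∈ C, c⁻¹ ∈ C) : DivisionRing C :=
  DivisionRing.ofIsUnitOrEqZero fun a => by
    by_cases ha : (a : Q) = 0
    · exact .inr (Subtype.ext ha)
    · exact .inl ⟨⟨a, ⟨_, hC _ a.2⟩, Subtype.ext (mul_inv_cancel₀ ha),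
        Subtype.ext (inv_mul_cancel₀ ha)⟩, rfl⟩

theorem stmt1_general (Q : Type*) [DivisionRing Q] (S C : Subring Q)
    (hfrac : ∀ q : Q, ∃ f ∈ S, ∃ g ∈ S, g ≠ 0 ∧ q = g⁻¹ * f)
    (hC : ∀ c ∈ C, c⁻¹ ∈ C)
    (hfin : Module.Finite C Q) :
    Submodule.span C (S : Set Q) = ⊤ := by
  let := C.divisionRingOfInvMem hC
  have hstable : ∀ s ∈ S, ∀ x ∈ span C (S : Set Q), x * s ∈ span C (S : Set Q) :=
    fun s hs _ hx => mul_mem_span_of_forall_mul_mem (fun y hy => S.mul_mem hy hs) hx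
  rw [eq_top_iff]
  rintro q -
  obtain ⟨f, hf, g, hg, hg0, rfl⟩ := hfrac q
  exact hstable f hf _ (inv_mem_of_forall_mul_mem (subset_span S.one_mem) hg0 (hstable g hg))

/-- Lemma (locali1), second part: let `S` be a left Ore domain with division ring of
fractions `Q`, and `C ⊆ Q` a division subring such that `Q` is finite dimensional as a
left `C`-vector space.  Then every element of `Q` is a left `C`-linear combination of
elements of `S`, i.e. the left `C`-span of `S` is all of `Q`. -/
theorem stmt1 (Q : Type*) [DivisionRing Q] (S C : Subring Q)
    (hdom : ∀ a b : Q, a ∈ S → b ∈ S → a * b = 0 → a = 0 ∨ b = 0)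
    (hfrac : ∀ q : Q, ∃ f ∈ S, ∃ g ∈ S, g ≠ 0 ∧ q = g⁻¹ * f)
    (hC : ∀ c ∈ C, c⁻¹ ∈ C)
    (hfin : Module.Finite C Q) :
    Submodule.span C (S : Set Q) = ⊤ :=
  stmt1_general Q S C hfrac hC hfin
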